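/- arXiv:2511.20519 — 2 statements merged into one kernel-verified Lean document; each statement's English description precedes it below -/
import Mathlib

section
/- Let (p_n), (q_n) be sequences of positive reals and (x_n) a sequence of reals, and set μ_n = p_n/(p_n + q_n). If x_n/μ_n → ∞ as n → ∞ and liminf_{n→∞} p_n > 0, then I_{x_n}(p_n, q_n) → 1 as n → ∞. -/
/-! The proof is Markov's inequality for the Beta distribution: its mean is `μ = p/(p+q)`, since
`B(p+1,q) = μ B(p,q)`, so the mass it puts on `(x, 1)` is at most `μ/x`. Hence
`1 - μ/x ≤ I_x(p,q) ≤ 1`, and `μ_n/x_n → 0`. -/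

open MeasureTheory Filter

/-- The regularized incomplete Beta function `I_x(p,q) = B_x(p,q)/B(p,q)`,
extended by `0` for `x < 0` and by `1` for `x > 1`. -/
noncomputable def regIncBeta (p q x : ℝ) : ℝ :=
  (∫ u in Set.Ioo (0 : ℝ) (min x 1), u ^ (p - 1) * (1 - u) ^ (q - 1)) /
    (∫ u in Set.Ioo (0 : ℝ) 1, u ^ (p - 1) * (1 - u) ^ (q - 1))

open Set ProbabilityTheory

lemma integral_Ioo_add_integral_Ioo {f : ℝ → ℝ} {a b c : ℝ} (hab : a < b) (hbc : b ≤ c)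
    (hf : IntegrableOn f (Ioo a c)) :
    (∫ u in Ioo a b, f u) + ∫ u in Ioo b c, f u = ∫ u in Ioo a c, f u := by
  rw [← Ioo_union_Ico_eq_Ioo hab hbc,
    setIntegral_union (Ico_disjoint_Ico_same.mono_left Ioo_subset_Ico_self) measurableSet_Ico
      (hf.mono_set (Ioo_subset_Ioo_right hbc)) (hf.mono_set (Ico_subset_Ioo_left hab)),
    integral_Ico_eq_integral_Ioo]

lemma integral_Ioo_le_integral_mul_div {f : ℝ → ℝ} {x : ℝ} (hx : 0 < x)
    (hf_nonneg : ∀ u ∈ Ioo (0 : ℝ) 1, 0 ≤ f u) (hf : IntegrableOn f (Ioo 0 1))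
    (hf_mean : IntegrableOn (fun u => u * f u) (Ioo 0 1)) :
    ∫ u in Ioo x 1, f u ≤ (∫ u in Ioo (0 : ℝ) 1, u * f u) / x := by
  have hsub : Ioo x 1 ⊆ Ioo (0 : ℝ) 1 := Ioo_subset_Ioo_left hx.le
  calc ∫ u in Ioo x 1, f u ≤ ∫ u in Ioo x 1, u * f u / x := by
        refine setIntegral_mono_on (hf.mono_set hsub) ((hf_mean.mono_set hsub).div_const x)
          measurableSet_Ioo fun u hu => ?_
        rw [le_div_iff₀ hx, mul_comm]
        exact mul_le_mul_of_nonneg_right hu.1.le (hf_nonneg u (hsub hu))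
    _ = (∫ u in Ioo x 1, u * f u) / x := integral_div x _
    _ ≤ (∫ u in Ioo (0 : ℝ) 1, u * f u) / x := by
        refine div_le_div_of_nonneg_right (setIntegral_mono_set hf_mean ?_ hsub.eventuallyLE) hx.le
        exact (ae_restrict_iff' measurableSet_Ioo).2 <| Eventually.of_forall fun u hu =>
          mul_nonneg hu.1.le (hf_nonneg u hu)

section Beta

variable {p q : ℝ}

lemma rpow_mul_one_sub_rpow_nonneg {u : ℝ} (hu : u ∈ Ioo (0 : ℝ) 1) :
    0 ≤ u ^ (p - 1) * (1 - u) ^ (q - 1) :=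
  mul_nonneg (Real.rpow_nonneg hu.1.le _) (Real.rpow_nonneg (sub_nonneg.2 hu.2.le) _)

lemma mul_rpow_mul_one_sub_rpow {u : ℝ} (hu : 0 < u) :
    u * (u ^ (p - 1) * (1 - u) ^ (q - 1)) = u ^ (p + 1 - 1) * (1 - u) ^ (q - 1) := by
  rw [add_sub_right_comm, Real.rpow_add_one hu.ne', mul_comm (u ^ (p - 1)) u, mul_assoc]

lemma ofReal_rpow_mul_one_sub_rpow {u : ℝ} (hu : u ∈ Ioo (0 : ℝ) 1) :
    ((u ^ (p - 1) * (1 - u) ^ (q - 1) : ℝ) : ℂ)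
      = (u : ℂ) ^ ((p : ℂ) - 1) * (1 - (u : ℂ)) ^ ((q : ℂ) - 1) := by
  push_cast
  rw [Complex.ofReal_cpow hu.1.le, Complex.ofReal_cpow (sub_nonneg.2 hu.2.le)]
  push_cast
  rfl

lemma integrableOn_rpow_mul_one_sub_rpow (hp : 0 < p) (hq : 0 < q) :
    IntegrableOn (fun u : ℝ => u ^ (p - 1) * (1 - u) ^ (q - 1)) (Ioo 0 1) := by
  have h := Complex.betaIntegral_convergent (u := p) (v := q) (by simpa) (by simpa)
  rw [intervalIntegrable_iff_integrableOn_Ioc_of_le zero_le_one] at h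
  refine IntegrableOn.congr_fun (h.mono_set Ioo_subset_Ioc_self).re (fun u hu => ?_)
    measurableSet_Ioo
  rw [← ofReal_rpow_mul_one_sub_rpow hu]
  exact Complex.ofReal_re _

lemma integrableOn_mul_rpow_mul_one_sub_rpow (hp : 0 < p) (hq : 0 < q) :
    IntegrableOn (fun u : ℝ => u * (u ^ (p - 1) * (1 - u) ^ (q - 1))) (Ioo 0 1) :=
  (integrableOn_rpow_mul_one_sub_rpow (by linarith) hq).congr_fun
    (fun _ hu => (mul_rpow_mul_one_sub_rpow hu.1).symm) measurableSet_Ioo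

lemma integral_rpow_mul_one_sub_rpow (hp : 0 < p) (hq : 0 < q) :
    ∫ u in Ioo (0 : ℝ) 1, u ^ (p - 1) * (1 - u) ^ (q - 1) = beta p q := by
  rw [beta_eq_betaIntegralReal p q hp hq, Complex.betaIntegral,
    intervalIntegral.integral_of_le zero_le_one, integral_Ioc_eq_integral_Ioo,
    ← setIntegral_congr_fun measurableSet_Ioo fun u hu => ofReal_rpow_mul_one_sub_rpow hu,
    integral_complex_ofReal, Complex.ofReal_re]

lemma beta_add_one_left (hp : 0 < p) (hq : 0 < q) : beta (p + 1) q = p / (p + q) * beta p q := by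
  have hpq : 0 < p + q := add_pos hp hq
  rw [beta, beta, Real.Gamma_add_one hp.ne', add_right_comm, Real.Gamma_add_one hpq.ne']
  field_simp [(Real.Gamma_pos_of_pos hpq).ne']

lemma integral_mul_rpow_mul_one_sub_rpow (hp : 0 < p) (hq : 0 < q) :
    ∫ u in Ioo (0 : ℝ) 1, u * (u ^ (p - 1) * (1 - u) ^ (q - 1)) = p / (p + q) * beta p q := by
  rw [← beta_add_one_left hp hq, ← integral_rpow_mul_one_sub_rpow (by linarith) hq]
  exact setIntegral_congr_fun measurableSet_Ioo fun _ hu => mul_rpow_mul_one_sub_rpow hu.1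

lemma regIncBeta_eq_div_beta (hp : 0 < p) (hq : 0 < q) (x : ℝ) :
    regIncBeta p q x =
      (∫ u in Ioo (0 : ℝ) (min x 1), u ^ (p - 1) * (1 - u) ^ (q - 1)) / beta p q := by
  rw [regIncBeta, integral_rpow_mul_one_sub_rpow hp hq]

lemma regIncBeta_le_one (hp : 0 < p) (hq : 0 < q) (x : ℝ) : regIncBeta p q x ≤ 1 := by
  rw [regIncBeta_eq_div_beta hp hq, div_le_one (beta_pos hp hq),
    ← integral_rpow_mul_one_sub_rpow hp hq]
  refine setIntegral_mono_set (integrableOn_rpow_mul_one_sub_rpow hp hq) ?_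
    (Ioo_subset_Ioo_right (min_le_right x 1)).eventuallyLE
  exact (ae_restrict_iff' measurableSet_Ioo).2 <| Eventually.of_forall fun _ hu =>
    rpow_mul_one_sub_rpow_nonneg hu

lemma one_sub_div_le_regIncBeta (hp : 0 < p) (hq : 0 < q) {x : ℝ} (hx : 0 < x) :
    1 - p / (p + q) / x ≤ regIncBeta p q x := by
  have hμx : 0 ≤ p / (p + q) / x := by positivity
  rcases le_or_gt 1 x with hx1 | hx1
  · rw [regIncBeta_eq_div_beta hp hq, min_eq_right hx1, integral_rpow_mul_one_sub_rpow hp hq,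
      div_self (beta_pos hp hq).ne']
    linarith
  have htail := integral_Ioo_le_integral_mul_div hx (fun _ hu => rpow_mul_one_sub_rpow_nonneg hu)
    (integrableOn_rpow_mul_one_sub_rpow hp hq) (integrableOn_mul_rpow_mul_one_sub_rpow hp hq)
  rw [integral_mul_rpow_mul_one_sub_rpow hp hq] at htail
  have hsplit := integral_Ioo_add_integral_Ioo hx hx1.le (integrableOn_rpow_mul_one_sub_rpow hp hq)
  rw [integral_rpow_mul_one_sub_rpow hp hq] at hsplit
  rw [regIncBeta_eq_div_beta hp hq, min_eq_left hx1.le, le_div_iff₀ (beta_pos hp hq)]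
  linarith [show p / (p + q) * beta p q / x = p / (p + q) / x * beta p q by ring]

end Beta

theorem regIncBeta_tendsto_one_of_ratio_top_general
    (p q : ℕ → ℝ) (x : ℕ → ℝ) (hp : ∀ n, 0 < p n) (hq : ∀ n, 0 < q n)
    (hratio : Tendsto (fun n => x n / (p n / (p n + q n))) atTop atTop) :
    Tendsto (fun n => regIncBeta (p n) (q n) (x n)) atTop (nhds 1) := by
  have hx : ∀ᶠ n in atTop, 0 < x n := by
    filter_upwards [hratio.eventually_gt_atTop 0] with n hn
    exact (div_pos_iff_of_pos_right (div_pos (hp n) (add_pos (hp n) (hq n)))).1 hn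
  have hlower : Tendsto (fun n => 1 - p n / (p n + q n) / x n) atTop (nhds 1) := by
    simpa [inv_div] using tendsto_const_nhds.sub hratio.inv_tendsto_atTop
  refine tendsto_of_tendsto_of_tendsto_of_le_of_le' hlower tendsto_const_nhds ?_ ?_
  · filter_upwards [hx] with n hn using one_sub_div_le_regIncBeta (hp n) (hq n) hn
  · exact Eventually.of_forall fun n => regIncBeta_le_one (hp n) (hq n) (x n)

/-- If `x_n/μ_n → ∞` with `μ_n = p_n/(p_n+q_n)` and `liminf p_n > 0`,
then `I_{x_n}(p_n,q_n) → 1`. -/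
theorem regIncBeta_tendsto_one_of_ratio_top
    (p q : ℕ → ℝ) (x : ℕ → ℝ) (hp : ∀ n, 0 < p n) (hq : ∀ n, 0 < q n)
    (hratio : Tendsto (fun n => x n / (p n / (p n + q n))) atTop atTop)
    (hliminf : 0 < Filter.liminf (fun n => (p n : EReal)) atTop) :
    Tendsto (fun n => regIncBeta (p n) (q n) (x n)) atTop (nhds 1) :=
  regIncBeta_tendsto_one_of_ratio_top_general p q x hp hq hratio
end

section
/- Let (p_n), (q_n) be sequences of positive reals and (x_n) a sequence of reals, and set μ_n = p_n/(p_n + q_n). If limsup_{n→∞} x_n/μ_n < 1 and p_n → ∞ as n → ∞, then I_{x_n}(p_n, q_n) → 0 as n → ∞. -/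
/-!
Substituting `u = d v` with `0 < d ≤ 1` gives `B_{dy}(p,q) ≤ d^p ((1 - dy)/(1 - y))^q B_y(p,q)`,
because `(1 - dv)/(1 - v)` is at least `1` and increases in `v`. If moreover `y ≤ a μ` with
`μ = p/(p+q)` and `a ≤ 1`, then `q y/(1 - y) ≤ a p`, so `((1 - dy)/(1 - y))^q ≤ exp((1 - d) a p)`
and `I_{dy}(p,q) ≤ exp(p (log d + (1 - d) a))`. Eventually `x_n ≤ c μ_n` for some `c < 1`; with
`d = a = √c` the exponent `log d + (1 - d) d ≤ -(1 - d)²` is negative, and `p_n → ∞` finishes.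
-/

open MeasureTheory Filter

open Set Real

noncomputable def betaIntegrand (p q u : ℝ) : ℝ := u ^ (p - 1) * (1 - u) ^ (q - 1)

noncomputable def incBeta (p q x : ℝ) : ℝ := ∫ u in Ioo 0 x, betaIntegrand p q u

theorem regIncBeta_eq_incBeta_div (p q x : ℝ) :
    regIncBeta p q x = incBeta p q (min x 1) / incBeta p q 1 := rfl

section IncompleteBeta

variable {p q : ℝ}

theorem integrableOn_betaIntegrand (hp : 0 < p) (hq : 0 < q) :
    IntegrableOn (betaIntegrand p q) (Ioo 0 1) := by
  have h := (Complex.betaIntegral_convergent (u := p) (v := q) (by simpa) (by simpa)).norm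
  rw [intervalIntegrable_iff_integrableOn_Ioo_of_le zero_le_one] at h
  refine h.congr_fun (fun u hu => ?_) measurableSet_Ioo
  have hcast : (1 : ℂ) - u = ((1 - u : ℝ) : ℂ) := by push_cast; rfl
  dsimp only
  rw [norm_mul, hcast, Complex.norm_cpow_eq_rpow_re_of_pos hu.1,
    Complex.norm_cpow_eq_rpow_re_of_pos (sub_pos.2 hu.2)]
  simp [betaIntegrand]

theorem betaIntegrand_nonneg {u : ℝ} (hu : u ∈ Ioo 0 1) : 0 ≤ betaIntegrand p q u :=
  mul_nonneg (rpow_nonneg hu.1.le _) (rpow_nonneg (sub_nonneg.2 hu.2.le) _)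

theorem betaIntegrand_pos {u : ℝ} (hu : u ∈ Ioo 0 1) : 0 < betaIntegrand p q u :=
  mul_pos (rpow_pos_of_pos hu.1 _) (rpow_pos_of_pos (sub_pos.2 hu.2) _)

theorem incBeta_of_nonpos {x : ℝ} (hx : x ≤ 0) : incBeta p q x = 0 := by
  rw [incBeta, Ioo_eq_empty_of_le hx, Measure.restrict_empty, integral_zero_measure]

theorem incBeta_nonneg {x : ℝ} (hx : x ≤ 1) : 0 ≤ incBeta p q x :=
  setIntegral_nonneg measurableSet_Ioo fun _ hu => betaIntegrand_nonneg ⟨hu.1, hu.2.trans_le hx⟩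

theorem incBeta_le_incBeta (hp : 0 < p) (hq : 0 < q) {x y : ℝ} (hxy : x ≤ y) (hy : y ≤ 1) :
    incBeta p q x ≤ incBeta p q y := by
  have hsub : Ioo (0 : ℝ) y ⊆ Ioo 0 1 := Ioo_subset_Ioo_right hy
  refine setIntegral_mono_set ((integrableOn_betaIntegrand hp hq).mono_set hsub) ?_
    (Ioo_subset_Ioo_right hxy).eventuallyLE
  exact (ae_restrict_iff' measurableSet_Ioo).2
    (ae_of_all _ fun u hu => betaIntegrand_nonneg (hsub hu))

theorem incBeta_one_pos (hp : 0 < p) (hq : 0 < q) : 0 < incBeta p q 1 := by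
  have h := intervalIntegral.intervalIntegral_pos_of_pos_on
    ((intervalIntegrable_iff_integrableOn_Ioo_of_le zero_le_one).2
      (integrableOn_betaIntegrand hp hq)) (fun _ hu => betaIntegrand_pos hu) one_pos
  rwa [intervalIntegral.integral_of_le zero_le_one, integral_Ioc_eq_integral_Ioo] at h

theorem regIncBeta_nonneg (hp : 0 < p) (hq : 0 < q) (x : ℝ) : 0 ≤ regIncBeta p q x :=
  div_nonneg (incBeta_nonneg (min_le_right _ _)) (incBeta_one_pos hp hq).le

theorem betaIntegrand_mul_le (hq : 0 < q) {d v y : ℝ} (hd0 : 0 < d) (hd1 : d ≤ 1)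
    (hv : v ∈ Ioo 0 y) (hy : y < 1) :
    betaIntegrand p q (d * v) ≤
      d ^ (p - 1) * ((1 - d * y) / (1 - y)) ^ q * betaIntegrand p q v := by
  obtain ⟨hv0, hvy⟩ := hv
  have h1v : 0 < 1 - v := by linarith
  have h1y : 0 < 1 - y := by linarith
  set r := (1 - d * v) / (1 - v)
  have hr1 : 1 ≤ r := (le_div_iff₀ h1v).2 (by nlinarith)
  have hrR : r ≤ (1 - d * y) / (1 - y) := (div_le_div_iff₀ h1v h1y).2 (by nlinarith)
  have hsplit : (1 - d * v) ^ (q - 1) = r ^ (q - 1) * (1 - v) ^ (q - 1) := by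
    rw [← mul_rpow (by linarith) h1v.le, div_mul_cancel₀ _ h1v.ne']
  -- `r ≥ 1` lets the exponent `q - 1`, of either sign, be raised to `q`.
  have hrq : r ^ (q - 1) ≤ ((1 - d * y) / (1 - y)) ^ q :=
    (rpow_le_rpow_of_exponent_le hr1 (by linarith)).trans (rpow_le_rpow (by linarith) hrR hq.le)
  calc betaIntegrand p q (d * v)
      = d ^ (p - 1) * r ^ (q - 1) * betaIntegrand p q v := by
        rw [betaIntegrand, betaIntegrand, mul_rpow hd0.le hv0.le, hsplit]; ring
    _ ≤ d ^ (p - 1) * ((1 - d * y) / (1 - y)) ^ q * betaIntegrand p q v := by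
        gcongr
        exact betaIntegrand_nonneg ⟨hv0, by linarith⟩

theorem incBeta_mul_le (hp : 0 < p) (hq : 0 < q) {d y : ℝ} (hd0 : 0 < d) (hd1 : d ≤ 1)
    (hy : y < 1) :
    incBeta p q (d * y) ≤ d ^ p * ((1 - d * y) / (1 - y)) ^ q * incBeta p q y := by
  set R := ((1 - d * y) / (1 - y)) ^ q
  have hsubst : incBeta p q (d * y) = d * ∫ v in Ioo 0 y, betaIntegrand p q (d * v) := by
    have h := Measure.setIntegral_comp_smul_of_pos volume (betaIntegrand p q) (Ioo 0 y) hd0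
    rw [LinearOrderedField.smul_Ioo hd0, mul_zero] at h
    simp only [smul_eq_mul, Module.finrank_self, pow_one] at h
    rw [h, incBeta, mul_inv_cancel_left₀ hd0.ne']
  have hle : (∫ v in Ioo 0 y, betaIntegrand p q (d * v)) ≤
      ∫ v in Ioo 0 y, d ^ (p - 1) * R * betaIntegrand p q v := by
    refine integral_mono_of_nonneg ?_
      (((integrableOn_betaIntegrand hp hq).mono_set (Ioo_subset_Ioo_right hy.le)).const_mul _) ?_
    · refine (ae_restrict_iff' measurableSet_Ioo).2 (ae_of_all _ fun v hv => ?_)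
      exact betaIntegrand_nonneg ⟨mul_pos hd0 hv.1, by nlinarith [hv.1, hv.2]⟩
    · exact (ae_restrict_iff' measurableSet_Ioo).2
        (ae_of_all _ fun v hv => betaIntegrand_mul_le hq hd0 hd1 hv hy)
  calc incBeta p q (d * y) ≤ d * ∫ v in Ioo 0 y, d ^ (p - 1) * R * betaIntegrand p q v := by
        rw [hsubst]; gcongr
    _ = d ^ p * R * incBeta p q y := by
        rw [integral_const_mul, incBeta, rpow_sub_one hd0.ne']
        field_simp

end IncompleteBeta

theorem div_one_sub_rpow_le_exp {d y q : ℝ} (hq : 0 ≤ q) (hd : d ≤ 1) (hy0 : 0 ≤ y) (hy : y < 1) :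
    ((1 - d * y) / (1 - y)) ^ q ≤ exp (q * ((1 - d) * y / (1 - y))) := by
  have h1y : 0 < 1 - y := by linarith
  have hbase : (1 - d * y) / (1 - y) = (1 - d) * y / (1 - y) + 1 := by field_simp; ring
  rw [mul_comm q, exp_mul]
  exact rpow_le_rpow (by rw [hbase]; positivity) (hbase ▸ add_one_le_exp _) hq

theorem mul_div_one_sub_le_of_le_mul_div {p q a y : ℝ} (hp : 0 < p) (hq : 0 < q) (ha : a ≤ 1)
    (hy0 : 0 ≤ y) (hy : y ≤ a * (p / (p + q))) :
    q * (y / (1 - y)) ≤ a * p := by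
  rw [mul_div_assoc', le_div_iff₀ (by linarith)] at hy
  have h1y : 0 < 1 - y := by nlinarith
  rw [mul_div_assoc', div_le_iff₀ h1y]
  nlinarith [mul_nonneg (mul_nonneg hy0 (sub_nonneg.2 ha)) hp.le]

theorem regIncBeta_le_exp {p q d a x : ℝ} (hp : 0 < p) (hq : 0 < q) (hd0 : 0 < d) (hd1 : d ≤ 1)
    (ha : a ≤ 1) (hx : x ≤ d * a * (p / (p + q))) :
    regIncBeta p q x ≤ exp (p * (log d + (1 - d) * a)) := by
  rcases le_or_gt x 0 with hx0 | hx0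
  · rw [regIncBeta_eq_incBeta_div, incBeta_of_nonpos (min_le_of_left_le hx0), zero_div]
    positivity
  set y := x / d
  have hxy : x = d * y := (mul_div_cancel₀ x hd0.ne').symm
  have hy0 : 0 < y := div_pos hx0 hd0
  have hya : y ≤ a * (p / (p + q)) := by rwa [hxy, mul_assoc, mul_le_mul_iff_right₀ hd0] at hx
  have hμ1 : p / (p + q) < 1 := (div_lt_one (by linarith)).2 (by linarith)
  have hy1 : y < 1 := by nlinarith [div_pos hp (add_pos hp hq)]
  have hx1 : x ≤ 1 := by rw [hxy]; nlinarith
  have hR : ((1 - d * y) / (1 - y)) ^ q ≤ exp ((1 - d) * a * p) :=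
    (div_one_sub_rpow_le_exp hq.le hd1 hy0.le hy1).trans <| exp_le_exp.2 <| by
      rw [mul_div_assoc, mul_left_comm, mul_assoc]
      exact mul_le_mul_of_nonneg_left
        (mul_div_one_sub_le_of_le_mul_div hp hq ha hy0.le hya) (by linarith)
  rw [regIncBeta_eq_incBeta_div, min_eq_left hx1, div_le_iff₀ (incBeta_one_pos hp hq), hxy]
  calc incBeta p q (d * y) ≤ d ^ p * ((1 - d * y) / (1 - y)) ^ q * incBeta p q y :=
        incBeta_mul_le hp hq hd0 hd1 hy1
    _ ≤ d ^ p * exp ((1 - d) * a * p) * incBeta p q 1 := by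
        gcongr
        · exact incBeta_nonneg hy1.le
        · exact incBeta_le_incBeta hp hq hy1.le le_rfl
    _ = exp (p * (log d + (1 - d) * a)) * incBeta p q 1 := by
        rw [rpow_def_of_pos hd0, ← exp_add]; ring_nf

theorem exists_pos_lt_one_eventually_lt_of_limsup_lt_one {α : Type*} {f : Filter α} {r : α → ℝ}
    (h : limsup (fun n => (r n : EReal)) f < 1) :
    ∃ c : ℝ, 0 < c ∧ c < 1 ∧ ∀ᶠ n in f, r n < c := by
  obtain ⟨c, hc, hc1⟩ := EReal.exists_between_coe_real (max_lt h zero_lt_one)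
  refine ⟨c, by exact_mod_cast (le_max_right _ _).trans_lt hc, by exact_mod_cast hc1, ?_⟩
  filter_upwards [eventually_lt_of_limsup_lt ((le_max_left _ _).trans_lt hc)] with n hn
  exact_mod_cast hn

/-- If `limsup x_n/μ_n < 1` with `μ_n = p_n/(p_n+q_n)` and `p_n → ∞`,
then `I_{x_n}(p_n,q_n) → 0`. -/
theorem regIncBeta_tendsto_zero_of_limsup_ratio_lt_one
    (p q : ℕ → ℝ) (x : ℕ → ℝ) (hp : ∀ n, 0 < p n) (hq : ∀ n, 0 < q n)
    (hlimsup : Filter.limsup (fun n => ((x n / (p n / (p n + q n))) : EReal)) atTop < 1)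
    (hptop : Tendsto p atTop atTop) :
    Tendsto (fun n => regIncBeta (p n) (q n) (x n)) atTop (nhds 0) := by
  have hratio : limsup (fun n => ((x n / (p n / (p n + q n)) : ℝ) : EReal)) atTop < 1 := by
    simpa only [EReal.coe_div, EReal.coe_add] using hlimsup
  obtain ⟨c, hc0, hc1, hev⟩ := exists_pos_lt_one_eventually_lt_of_limsup_lt_one hratio
  set d := √c
  have hd0 : 0 < d := sqrt_pos.2 hc0
  have hd1 : d < 1 := (sqrt_lt' one_pos).2 (by rwa [one_pow])
  have hκ : log d + (1 - d) * d < 0 := by nlinarith [log_le_sub_one_of_pos hd0]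
  refine squeeze_zero' (Eventually.of_forall fun n => regIncBeta_nonneg (hp n) (hq n) _) ?_
    (tendsto_exp_atBot.comp (hptop.atTop_mul_const_of_neg hκ))
  filter_upwards [hev] with n hn
  refine regIncBeta_le_exp (hp n) (hq n) hd0 hd1.le hd1.le ?_
  rw [mul_self_sqrt hc0.le]
  exact ((div_lt_iff₀ (div_pos (hp n) (add_pos (hp n) (hq n)))).1 hn).le
end
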